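/- Let Δ be an irreducible root system with highest root θ and dual Coxeter number h*. Then the number of positive roots γ with (θ, γ) > 0 equals 2h* − 3. -/

import Mathlib

/-!
Summing the positive roots gives `2ρ` with `(2ρ, α) = (α, α)` for every simple root `α`, hence
`(2ρ, θ) = ht(θ^∨) (θ, θ)`. On the other hand, since `θ` is highest, every positive root `γ ≠ θ`
has `⟨γ, θ^∨⟩ ∈ {0, 1}`, so `(2ρ, θ) = (θ, θ) + (N - 1) (θ, θ) / 2`, where `N` counts the positive
roots `γ` with `(θ, γ) > 0`. Comparing, `N = 2 ht(θ^∨) - 1 = 2h* - 3`.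
-/

open scoped RealInnerProductSpace
open scoped Classical

/-- An (irreducible, reduced, crystallographic) root system in a real inner product
space `V`, together with a choice of base (simple roots), coordinate functions with
respect to the base, and fundamental weights. -/
structure RootSystemData (V : Type*) [NormedAddCommGroup V] [InnerProductSpace ℝ V] where
  Δ : Finset V
  base : Finset V
  base_sub : base ⊆ Δ
  root_ne_zero : ∀ γ ∈ Δ, γ ≠ 0
  span_eq_top : Submodule.span ℝ (Δ : Set V) = ⊤
  reflect_mem : ∀ γ ∈ Δ, ∀ δ ∈ Δ, δ - (2 * ⟪δ, γ⟫ / ⟪γ, γ⟫) • γ ∈ Δ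
  crystallographic : ∀ γ ∈ Δ, ∀ δ ∈ Δ, ∃ k : ℤ, 2 * ⟪δ, γ⟫ / ⟪γ, γ⟫ = (k : ℝ)
  reduced : ∀ γ ∈ Δ, (2 : ℝ) • γ ∉ Δ
  coord : V → V → ℝ
  coord_add : ∀ α x y, coord (x + y) α = coord x α + coord y α
  coord_smul : ∀ α (c : ℝ) (x : V), coord (c • x) α = c * coord x α
  coord_base : ∀ α ∈ base, ∀ β ∈ base, coord β α = if β = α then 1 else 0
  root_decomp : ∀ γ ∈ Δ, γ = ∑ α ∈ base, coord γ α • α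
  pos_or_neg : ∀ γ ∈ Δ, (∀ α ∈ base, 0 ≤ coord γ α) ∨ (∀ α ∈ base, coord γ α ≤ 0)
  coord_int : ∀ γ ∈ Δ, ∀ α ∈ base, ∃ k : ℤ, coord γ α = (k : ℝ)
  irreducible : ∀ S ⊆ Δ, S.Nonempty →
    (∀ γ ∈ S, ∀ δ ∈ Δ, δ ∉ S → ⟪γ, δ⟫ = 0) → S = Δ
  fw : V → V
  fw_spec : ∀ α ∈ base, ∀ β ∈ base, ⟪fw α, β⟫ = if β = α then ⟪α, α⟫ / 2 else 0

namespace RootSystemData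

variable {V : Type*} [NormedAddCommGroup V] [InnerProductSpace ℝ V]

/-- The set of positive roots (nonnegative coordinates w.r.t. the base). -/
noncomputable def posRoots (R : RootSystemData V) : Finset V :=
  R.Δ.filter fun γ => ∀ α ∈ R.base, 0 ≤ R.coord γ α

/-- The height of a root: the sum of its coordinates in the base. -/
noncomputable def ht (R : RootSystemData V) (γ : V) : ℝ :=
  ∑ α ∈ R.base, R.coord γ α

/-- The height of the coroot `γ^∨` in the dual root system. -/
noncomputable def dualHt (R : RootSystemData V) (γ : V) : ℝ :=
  ∑ α ∈ R.base, R.coord γ α * ⟪α, α⟫ / ⟪γ, γ⟫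

/-- `R_α`: the set of roots having positive inner product with the fundamental
weight `ϖ_α`. -/
noncomputable def Rset (R : RootSystemData V) (α : V) : Finset V :=
  R.Δ.filter fun γ => 0 < ⟪γ, R.fw α⟫

/-- `Δ_α(i)`: the set of roots whose coefficient of `α` equals `i`. -/
noncomputable def level (R : RootSystemData V) (α : V) (i : ℤ) : Finset V :=
  R.Δ.filter fun γ => R.coord γ α = (i : ℝ)


variable {R : RootSystemData V}

lemma inner_self_pos {γ : V} (hγ : γ ∈ R.Δ) : 0 < ⟪γ, γ⟫ :=
  real_inner_self_pos.2 (R.root_ne_zero γ hγ)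

lemma coord_neg (α x : V) : R.coord (-x) α = -R.coord x α := by
  simpa using R.coord_smul α (-1) x

lemma coord_sub_smul (α x y : V) (c : ℝ) :
    R.coord (x - c • y) α = R.coord x α - c * R.coord y α := by
  rw [sub_eq_add_neg, R.coord_add, ← neg_smul, R.coord_smul]; ring

lemma mem_posRoots {γ : V} : γ ∈ R.posRoots ↔ γ ∈ R.Δ ∧ ∀ α ∈ R.base, 0 ≤ R.coord γ α :=
  Finset.mem_filter

lemma base_subset_posRoots : R.base ⊆ R.posRoots := fun α hα =>
  mem_posRoots.2 ⟨R.base_sub hα, fun β hβ => by rw [R.coord_base β hβ α hα]; split <;> norm_num⟩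

lemma exists_coord_ne_zero {γ : V} (hγ : γ ∈ R.Δ) : ∃ α ∈ R.base, R.coord γ α ≠ 0 := by
  by_contra! h
  refine R.root_ne_zero γ hγ ?_
  rw [R.root_decomp γ hγ]
  exact Finset.sum_eq_zero fun α hα => by rw [h α hα, zero_smul]

lemma eq_of_coord_eq {γ δ : V} (hγ : γ ∈ R.Δ) (hδ : δ ∈ R.Δ)
    (h : ∀ α ∈ R.base, R.coord γ α = R.coord δ α) : γ = δ := by
  rw [R.root_decomp γ hγ, R.root_decomp δ hδ]
  exact Finset.sum_congr rfl fun α hα => by rw [h α hα]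

noncomputable def rootReflection (α γ : V) : V :=
  γ - (2 * ⟪γ, α⟫ / ⟪α, α⟫) • α

lemma rootReflection_mem {α γ : V} (hα : α ∈ R.Δ) (hγ : γ ∈ R.Δ) :
    rootReflection α γ ∈ R.Δ :=
  R.reflect_mem α hα γ hγ

lemma inner_rootReflection_left {α : V} (hα : α ≠ 0) (γ : V) :
    ⟪rootReflection α γ, α⟫ = -⟪γ, α⟫ := by
  have : ⟪α, α⟫ ≠ 0 := inner_self_ne_zero.2 hα
  rw [rootReflection, inner_sub_left, real_inner_smul_left]
  field_simp
  ring

lemma rootReflection_rootReflection {α : V} (hα : α ≠ 0) (γ : V) :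
    rootReflection α (rootReflection α γ) = γ := by
  rw [rootReflection, inner_rootReflection_left hα, rootReflection]
  module

lemma coord_rootReflection_of_ne {α β : V} (hα : α ∈ R.base) (hβ : β ∈ R.base) (hβα : β ≠ α)
    (γ : V) : R.coord (rootReflection α γ) β = R.coord γ β := by
  rw [rootReflection, coord_sub_smul, R.coord_base β hβ α hα, if_neg hβα.symm, mul_zero,
    sub_zero]

lemma neg_mem {γ : V} (hγ : γ ∈ R.Δ) : -γ ∈ R.Δ := by
  have h := rootReflection_mem hγ hγ
  rwa [rootReflection, mul_div_assoc, div_self (inner_self_pos hγ).ne', mul_one, two_smul,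
    sub_add_cancel_left] at h

/-- The Cartan integer of `k • α` with `α` is `2 / k`, and `2 • α` is excluded by
reducedness. -/
lemma eq_one_of_intCast_smul_mem {α : V} (hα : α ∈ R.Δ) {k : ℤ} (hk : 0 < k)
    (hkα : (k : ℝ) • α ∈ R.Δ) : k = 1 := by
  obtain ⟨m, hm⟩ := R.crystallographic _ hkα α hα
  have hα0 : ⟪α, α⟫ ≠ 0 := (inner_self_pos hα).ne'
  have hk0 : (k : ℝ) ≠ 0 := by exact_mod_cast hk.ne'
  have hmk : k * m = 2 := by
    rw [real_inner_smul_left, real_inner_smul_right] at hm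
    field_simp at hm
    exact_mod_cast hm.symm
  have hk2 : k ≤ 2 := Int.le_of_dvd two_pos ⟨m, hmk.symm⟩
  interval_cases k
  · rfl
  · exact absurd (by exact_mod_cast hkα) (R.reduced α hα)

/-- Otherwise `γ` would be a positive integer multiple of `α`, hence `α` itself. -/
lemma exists_coord_pos_of_ne {γ α : V} (hγ : γ ∈ R.posRoots) (hα : α ∈ R.base) (hne : γ ≠ α) :
    ∃ β ∈ R.base, β ≠ α ∧ 0 < R.coord γ β := by
  obtain ⟨hγΔ, hγpos⟩ := mem_posRoots.1 hγ
  by_contra! hcon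
  have hzero : ∀ β ∈ R.base, β ≠ α → R.coord γ β = 0 := fun β hβ hβα =>
    le_antisymm (hcon β hβ hβα) (hγpos β hβ)
  have hγα : γ = R.coord γ α • α := by
    conv_lhs => rw [R.root_decomp γ hγΔ]
    exact Finset.sum_eq_single α (fun β hβ hβα => by rw [hzero β hβ hβα, zero_smul])
      (fun h => (h hα).elim)
  obtain ⟨k, hk⟩ := R.coord_int γ hγΔ α hα
  have hk0 : 0 < k := by
    obtain ⟨β, hβ, hβ0⟩ := exists_coord_ne_zero hγΔ
    have hβα : β = α := by_contra fun h => hβ0 (hzero β hβ h)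
    subst hβα
    exact_mod_cast hk ▸ lt_of_le_of_ne (hγpos β hβ) (Ne.symm hβ0)
  rw [hk] at hγα
  have hk1 := eq_one_of_intCast_smul_mem (R.base_sub hα) hk0 (hγα ▸ hγΔ)
  exact hne (by rw [hγα, hk1, Int.cast_one, one_smul])

/-- `s_α` changes only the `α`-coordinate, so a positive coordinate at some `β ≠ α` survives. -/
lemma rootReflection_mem_posRoots_erase {α γ : V} (hα : α ∈ R.base)
    (hγ : γ ∈ R.posRoots.erase α) : rootReflection α γ ∈ R.posRoots.erase α := by
  obtain ⟨hγα, hγpos⟩ := Finset.mem_erase.1 hγ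
  obtain ⟨β, hβ, hβα, hγβ⟩ := exists_coord_pos_of_ne hγpos hα hγα
  have hsβ : 0 < R.coord (rootReflection α γ) β := by
    rwa [coord_rootReflection_of_ne hα hβ hβα]
  have hsΔ := rootReflection_mem (R.base_sub hα) (mem_posRoots.1 hγpos).1
  refine Finset.mem_erase.2 ⟨fun h => ?_, mem_posRoots.2 ⟨hsΔ, ?_⟩⟩
  · rw [h, R.coord_base β hβ α hα, if_neg hβα.symm] at hsβ
    exact lt_irrefl 0 hsβ
  · exact (R.pos_or_neg _ hsΔ).resolve_right fun h => (h β hβ).not_gt hsβ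

/-- `(2ρ, α) = (α, α)` for `α` simple, where `2ρ` is the sum of the positive roots: `s_α` pairs
off the other positive roots with opposite inner products. -/
lemma sum_inner_posRoots {α : V} (hα : α ∈ R.base) :
    ∑ γ ∈ R.posRoots, ⟪γ, α⟫ = ⟪α, α⟫ := by
  have hα0 : α ≠ 0 := R.root_ne_zero α (R.base_sub hα)
  have herase : ∑ γ ∈ R.posRoots.erase α, ⟪γ, α⟫ = 0 :=
    Finset.sum_involution (fun γ _ => rootReflection α γ)
      (fun γ _ => by rw [inner_rootReflection_left hα0, add_neg_cancel])
      (fun γ _ hγ hfix => hγ (by linarith [hfix ▸ inner_rootReflection_left hα0 γ]))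
      (fun _ hγ => rootReflection_mem_posRoots_erase hα hγ)
      (fun γ _ => rootReflection_rootReflection hα0 γ)
  rw [← Finset.add_sum_erase _ _ (base_subset_posRoots hα), herase, add_zero]

lemma sum_inner_posRoots_eq_dualHt_mul {θ : V} (hθ : θ ∈ R.Δ) :
    ∑ γ ∈ R.posRoots, ⟪γ, θ⟫ = R.dualHt θ * ⟪θ, θ⟫ := by
  have hθθ : ⟪θ, θ⟫ ≠ 0 := (inner_self_pos hθ).ne'
  calc ∑ γ ∈ R.posRoots, ⟪γ, θ⟫
      = ∑ γ ∈ R.posRoots, ∑ α ∈ R.base, R.coord θ α * ⟪γ, α⟫ := by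
        refine Finset.sum_congr rfl fun γ _ => ?_
        conv_lhs => rw [R.root_decomp θ hθ]
        simp only [inner_sum, real_inner_smul_right]
    _ = ∑ α ∈ R.base, R.coord θ α * ⟪α, α⟫ := by
        rw [Finset.sum_comm]
        exact Finset.sum_congr rfl fun α hα => by rw [← Finset.mul_sum, sum_inner_posRoots hα]
    _ = R.dualHt θ * ⟪θ, θ⟫ := by
        rw [dualHt, Finset.sum_mul]
        exact Finset.sum_congr rfl fun α _ => by field_simp

def IsHighestRoot (R : RootSystemData V) (θ : V) : Prop :=
  θ ∈ R.Δ ∧ ∀ γ ∈ R.Δ, ∀ β ∈ R.base, R.coord γ β ≤ R.coord θ β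

namespace IsHighestRoot

variable {θ : V}

lemma one_le_coord (hθ : R.IsHighestRoot θ) {α : V} (hα : α ∈ R.base) : 1 ≤ R.coord θ α := by
  simpa [R.coord_base α hα α hα] using hθ.2 α (R.base_sub hα) α hα

lemma mem_posRoots (hθ : R.IsHighestRoot θ) : θ ∈ R.posRoots :=
  RootSystemData.mem_posRoots.2 ⟨hθ.1, fun _ hα => zero_le_one.trans (hθ.one_le_coord hα)⟩

/-- Otherwise `s_θ γ = γ - k θ` with `k ≤ -1` would lie above `θ` at every nonzero
coordinate of `γ`. -/
lemma inner_nonneg (hθ : R.IsHighestRoot θ) {γ : V} (hγ : γ ∈ R.posRoots) : 0 ≤ ⟪θ, γ⟫ := by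
  obtain ⟨hγΔ, hγpos⟩ := RootSystemData.mem_posRoots.1 hγ
  obtain ⟨k, hk⟩ := R.crystallographic θ hθ.1 γ hγΔ
  by_contra! hneg
  have hk0 : k < 0 := by
    have : (k : ℝ) < 0 := hk ▸ div_neg_of_neg_of_pos (by rw [real_inner_comm]; linarith)
      (inner_self_pos hθ.1)
    exact_mod_cast this
  have hk1 : (k : ℝ) ≤ -1 := by
    have : k ≤ -1 := by omega
    exact_mod_cast this
  have hs := rootReflection_mem hθ.1 hγΔ
  rw [rootReflection, hk] at hs
  obtain ⟨α, hα, hα0⟩ := exists_coord_ne_zero hγΔ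
  have hle := hθ.2 _ hs α hα
  rw [coord_sub_smul] at hle
  exact hα0 (le_antisymm (by nlinarith [hθ.one_le_coord hα, hγpos α hα]) (hγpos α hα))

/-- The Cartan integer `⟨γ, θ^∨⟩` of a positive root `γ ≠ θ` is at most `1`: otherwise
`k θ - γ = -s_θ γ` would lie above `θ`. -/
lemma inner_eq_half (hθ : R.IsHighestRoot θ) {γ : V} (hγ : γ ∈ R.posRoots) (hne : γ ≠ θ)
    (hpos : 0 < ⟪θ, γ⟫) : ⟪γ, θ⟫ = ⟪θ, θ⟫ / 2 := by
  obtain ⟨hγΔ, hγpos⟩ := RootSystemData.mem_posRoots.1 hγ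
  obtain ⟨k, hk⟩ := R.crystallographic θ hθ.1 γ hγΔ
  have hθθ := inner_self_pos hθ.1
  have hk0 : 0 < k := by
    have : (0 : ℝ) < k := hk ▸ div_pos (by rw [real_inner_comm]; linarith) hθθ
    exact_mod_cast this
  have hk1 : k = 1 := by
    by_contra hk1
    have hk2 : (2 : ℝ) ≤ k := by exact_mod_cast (by omega : 2 ≤ k)
    have hs := neg_mem (rootReflection_mem hθ.1 hγΔ)
    rw [rootReflection, hk] at hs
    refine hne (eq_of_coord_eq hγΔ hθ.1 fun α hα => ?_)
    have hle := hθ.2 _ hs α hα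
    rw [coord_neg, coord_sub_smul] at hle
    nlinarith [hθ.one_le_coord hα, hθ.2 γ hγΔ α hα]
  rw [hk1, Int.cast_one] at hk
  field_simp at hk
  linarith

lemma sum_inner_posRoots_eq (hθ : R.IsHighestRoot θ) :
    ∑ γ ∈ R.posRoots, ⟪γ, θ⟫ =
      (((R.posRoots.filter fun γ => 0 < ⟪θ, γ⟫).card : ℝ) + 1) / 2 * ⟪θ, θ⟫ := by
  set F := R.posRoots.filter fun γ => 0 < ⟪θ, γ⟫
  have hθF : θ ∈ F := Finset.mem_filter.2 ⟨hθ.mem_posRoots, inner_self_pos hθ.1⟩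
  have hterm : ∀ γ ∈ F, ⟪γ, θ⟫ = ⟪θ, θ⟫ / 2 + if γ = θ then ⟪θ, θ⟫ / 2 else 0 := by
    intro γ hγ
    obtain ⟨hγpos, hγθ⟩ := Finset.mem_filter.1 hγ
    split_ifs with h
    · rw [h]; ring
    · rw [hθ.inner_eq_half hγpos h hγθ, add_zero]
  have hsupport : ∀ γ ∈ R.posRoots, ⟪γ, θ⟫ ≠ 0 → 0 < ⟪θ, γ⟫ := fun γ hγ h0 =>
    (hθ.inner_nonneg hγ).lt_of_ne (by rwa [real_inner_comm, ne_comm])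
  rw [← Finset.sum_filter_of_ne hsupport, Finset.sum_congr rfl hterm, Finset.sum_add_distrib,
    Finset.sum_const, Finset.sum_ite_eq' F θ, if_pos hθF, nsmul_eq_mul]
  ring

end IsHighestRoot

end RootSystemData

/-- The number of positive roots `γ` with `(θ, γ) > 0`, where `θ` is the
highest root, equals `2h* − 3`, with `h*` the dual Coxeter number. -/
theorem card_pos_inner_highest_root
    {V : Type*} [NormedAddCommGroup V] [InnerProductSpace ℝ V]
    (R : RootSystemData V)
    (θ : V) (hθ : θ ∈ R.Δ)
    (hθmax : ∀ γ ∈ R.Δ, ∀ β ∈ R.base, R.coord γ β ≤ R.coord θ β) :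
    (((R.posRoots.filter fun γ => 0 < ⟪θ, γ⟫).card : ℝ)) = 2 * (R.dualHt θ + 1) - 3 := by
  have hsum := (show R.IsHighestRoot θ from ⟨hθ, hθmax⟩).sum_inner_posRoots_eq
  rw [R.sum_inner_posRoots_eq_dualHt_mul hθ] at hsum
  have := mul_right_cancel₀ (R.inner_self_pos hθ).ne' hsum
  linarith
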